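/- arXiv:2506.09840 — 3 statements merged into one kernel-verified Lean document; each statement's English description precedes it below -/
import Mathlib

section
/- Let θ ∈ (0,π) and define the dual capillary gauge function F_θ^∘(x) := (1/sin θ)·(√(|x|² + cot²θ·⟨e,x⟩²) − cot θ·⟨e,x⟩) for x ∈ ℝ^{n+1}. Then for every r > 0, the level set {x in the closed upper half-space : F_θ^∘(x) = r} equals the spherical cap C_{r,θ}(o) := {x in the closed upper half-space : |x − r cos θ·e| = r}. -/
open MeasureTheory Real Set Filter
open scoped RealInnerProductSpace

noncomputable section

/-- Ambient Euclidean space `ℝ^{n+1}`. -/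
abbrev Amb (n : ℕ) : Type := EuclideanSpace ℝ (Fin (n + 1))

/-- The `(n+1)`-st standard basis vector `E_{n+1}`. -/
def lastBasis (n : ℕ) : Amb n := EuclideanSpace.single (Fin.last n) 1

/-- The vector `e := -E_{n+1}`. -/
def eVec (n : ℕ) : Amb n := -(lastBasis n)

/-- The closed upper half-space `\overline{ℝ^{n+1}_+}`. -/
def upperHalf (n : ℕ) : Set (Amb n) := {x | 0 ≤ x (Fin.last n)}

/-- The boundary hyperplane `∂ℝ^{n+1}_+`. -/
def hyperplane (n : ℕ) : Set (Amb n) := {x | x (Fin.last n) = 0}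

/-- `ℓ(x) := sin²θ + cos θ · ⟨x, e⟩`. -/
def ell (n : ℕ) (θ : ℝ) (x : Amb n) : ℝ := sin θ ^ 2 + cos θ * ⟪x, eVec n⟫

/-- The unit spherical cap `C_θ`. -/
def capSphere (n : ℕ) (θ : ℝ) : Set (Amb n) :=
  {ξ | ξ ∈ upperHalf n ∧ ‖ξ - cos θ • eVec n‖ = 1}

/-- The unit spherical cap body `Ĉ_θ`. -/
def capBodyUnit (n : ℕ) (θ : ℝ) : Set (Amb n) :=
  {x | x ∈ upperHalf n ∧ ‖x - cos θ • eVec n‖ ≤ 1}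

/-- A capillary convex body: a compact convex subset of the closed upper half-space with
nonempty interior, whose flat part `K_f` has nonempty interior relative to the boundary
hyperplane and whose curved boundary `K_u` is nonempty. -/
structure IsCapillaryBody (n : ℕ) (K : Set (Amb n)) : Prop where
  compact : IsCompact K
  convex : Convex ℝ K
  subset_upper : K ⊆ upperHalf n
  interior_nonempty : (interior K).Nonempty
  flat_relint_nonempty : (intrinsicInterior ℝ (K ∩ hyperplane n)).Nonempty
  curved_nonempty : (frontier K ∩ {x | 0 < x (Fin.last n)}).Nonempty

/-- Normal cone (of unit normal vectors) of `K` at `x`. -/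
def normalCone (n : ℕ) (K : Set (Amb n)) (x : Amb n) : Set (Amb n) :=
  {ζ | ‖ζ‖ = 1 ∧ ∀ y ∈ K, ⟪ζ, y - x⟫ ≤ 0}

/-- A `θ`-capillary convex body: a capillary convex body with contact angle at most `θ`
along the relative boundary of its flat part. -/
def IsThetaCapillary (n : ℕ) (θ : ℝ) (K : Set (Amb n)) : Prop :=
  IsCapillaryBody n K ∧
    ∀ x ∈ intrinsicFrontier ℝ (K ∩ hyperplane n),
      cos θ ≤ sSup ((fun ζ => ⟪ζ, lastBasis n⟫) '' normalCone n K x)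

/-- Support function `h_z(ξ) := max_{y ∈ K} ⟨ξ - cos θ · e, y - z⟩`. -/
def suppFn (n : ℕ) (θ : ℝ) (K : Set (Amb n)) (z ξ : Amb n) : ℝ :=
  sSup ((fun y => ⟪ξ - cos θ • eVec n, y - z⟫) '' K)

/-- Capillary support function `u_z := h_z / ℓ`. -/
def capSupp (n : ℕ) (θ : ℝ) (K : Set (Amb n)) (z ξ : Amb n) : ℝ :=
  suppFn n θ K z ξ / ell n θ ξ

/-- Capillary polar body `K*_z`. -/
def capPolar (n : ℕ) (θ : ℝ) (K : Set (Amb n)) (z : Amb n) : Set (Amb n) :=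
  {x | ∃ r : ℝ, 0 ≤ r ∧ ∃ ξ ∈ capSphere n θ, x = z + r • ξ ∧ r * capSupp n θ K z ξ ≤ 1}

/-- Capillary area `ω_θ := ∫_{C_θ} ℓ dσ` of `C_θ` (surface measure = `n`-dimensional
Hausdorff measure). -/
def omegaTheta (n : ℕ) (θ : ℝ) : ℝ := ∫ ξ in capSphere n θ, ell n θ ξ ∂μH[(n : ℝ)]

/-- `ℰ_θ(K, z) := (1/ω_θ) ∫_{C_θ} log(u_z) ℓ dσ`. -/
def entropyAt (n : ℕ) (θ : ℝ) (K : Set (Amb n)) (z : Amb n) : ℝ :=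
  (1 / omegaTheta n θ) *
    ∫ ξ in capSphere n θ, Real.log (capSupp n θ K z ξ) * ell n θ ξ ∂μH[(n : ℝ)]

/-- Capillary entropy `ℰ_θ(K)`: supremum of `ℰ_θ(K, z)` over `z` in the relative interior
of the flat part `K_f`. -/
def capEntropy (n : ℕ) (θ : ℝ) (K : Set (Amb n)) : ℝ :=
  sSup (entropyAt n θ K '' intrinsicInterior ℝ (K ∩ hyperplane n))

/-- The spherical cap body `Ĉ_{r,θ}(x₀)`. -/
def capBodyAt (n : ℕ) (θ r : ℝ) (x₀ : Amb n) : Set (Amb n) :=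
  {x | x ∈ upperHalf n ∧ ‖x - (x₀ + (r * cos θ) • eVec n)‖ ≤ r}

/-- Capillary inner radius `ρ₋(K, θ)`. -/
def capInRadius (n : ℕ) (θ : ℝ) (K : Set (Amb n)) : ℝ :=
  sSup {r : ℝ | 0 < r ∧ ∃ x₀ ∈ hyperplane n, capBodyAt n θ r x₀ ⊆ K}

/-- Capillary outer radius `ρ₊(K, θ)`. -/
def capOutRadius (n : ℕ) (θ : ℝ) (K : Set (Amb n)) : ℝ :=
  sInf {r : ℝ | 0 < r ∧ ∃ x₀ ∈ hyperplane n, K ⊆ capBodyAt n θ r x₀}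

/-- Classical inner radius `ρ₋(K)`. -/
def inRadius (n : ℕ) (K : Set (Amb n)) : ℝ :=
  sSup {ρ : ℝ | 0 < ρ ∧ ∃ x₀ ∈ hyperplane n, Metric.ball x₀ ρ ∩ upperHalf n ⊆ K}

/-- Classical outer radius `ρ₊(K)`. -/
def outRadius (n : ℕ) (K : Set (Amb n)) : ℝ :=
  sInf {ρ : ℝ | 0 < ρ ∧ ∃ x₀ ∈ hyperplane n, K ⊆ Metric.ball x₀ ρ}

/-- Dual capillary gauge function `F_θ^∘`. -/
def Fdual (n : ℕ) (θ : ℝ) (x : Amb n) : ℝ :=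
  (1 / sin θ) *
    (Real.sqrt (‖x‖ ^ 2 + (cos θ / sin θ) ^ 2 * ⟪eVec n, x⟫ ^ 2) -
      (cos θ / sin θ) * ⟪eVec n, x⟫)

/-- Capillary gauge function `F_θ(η) := |η| + cos θ · ⟨e, η⟩`. -/
def Fgauge (n : ℕ) (θ : ℝ) (η : Amb n) : ℝ := ‖η‖ + cos θ * ⟪eVec n, η⟫

/-- Capillary Cahn–Hoffman map `Ψ(ξ) := (ξ - cos θ · e)/ℓ(ξ)`. -/
def cahnHoffman (n : ℕ) (θ : ℝ) (ξ : Amb n) : Amb n :=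
  (ell n θ ξ)⁻¹ • (ξ - cos θ • eVec n)

/-- The ellipsoid portion `D_θ`. -/
def Dtheta (n : ℕ) (θ : ℝ) : Set (Amb n) :=
  {η | Fgauge n θ η = 1 ∧ cos θ / sin θ ^ 2 ≤ ⟪η, lastBasis n⟫}

/-- Reflection across the boundary hyperplane `∂ℝ^{n+1}_+`. -/
def reflect (n : ℕ) (x : Amb n) : Amb n :=
  x - (2 * ⟪x, lastBasis n⟫) • lastBasis n

/-- for `θ ∈ (0, π)` and `r > 0`, the level set `{F_θ^∘ = r}` in the closed
upper half-space is the spherical cap `C_{r,θ}(o) = {x : |x - r cos θ · e| = r}`. -/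
theorem stmt_0 (n : ℕ) (hn : 1 ≤ n) (θ : ℝ) (hθ : θ ∈ Set.Ioo 0 π) (r : ℝ) (hr : 0 < r) :
    {x : Amb n | x ∈ upperHalf n ∧ Fdual n θ x = r} =
      {x : Amb n | x ∈ upperHalf n ∧ ‖x - (r * cos θ) • eVec n‖ = r} := by
  obtain ⟨hθ0, hθπ⟩ := hθ
  have hs : 0 < sin θ := Real.sin_pos_of_pos_of_lt_pi hθ0 hθπ
  have hpy : sin θ ^ 2 + cos θ ^ 2 = 1 := Real.sin_sq_add_cos_sq θ
  have hc1 : cos θ ≤ 1 := Real.cos_le_one θ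
  ext x
  simp only [Set.mem_setOf_eq]
  apply and_congr_right
  intro hx
  have hxlast : 0 ≤ x (Fin.last n) := hx
  set s := sin θ with hsdef
  set c := cos θ with hcdef
  set t : ℝ := ⟪eVec n, x⟫ with htdef
  have hs' : s ≠ 0 := ne_of_gt hs
  have hnorm_e : ‖eVec n‖ = 1 := by
    simp [eVec, lastBasis, EuclideanSpace.norm_single]
  have ht : t = -(x (Fin.last n)) := by
    simp [htdef, eVec, lastBasis, inner_neg_left, EuclideanSpace.inner_single_left]
  have htle : t ≤ 0 := by rw [ht]; linarith
  have habs : t ^ 2 ≤ ‖x‖ ^ 2 := by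
    have h1 : |t| ≤ ‖eVec n‖ * ‖x‖ := abs_real_inner_le_norm _ _
    rw [hnorm_e, one_mul] at h1
    calc t ^ 2 = |t| ^ 2 := (sq_abs t).symm
      _ ≤ ‖x‖ ^ 2 := by nlinarith [abs_nonneg t, norm_nonneg x]
  have hcomm : ⟪x, eVec n⟫ = t := by rw [htdef, real_inner_comm]
  have hexp : ‖x - (r * c) • eVec n‖ ^ 2 = ‖x‖ ^ 2 - 2 * (r * c) * t + (r * c) ^ 2 := by
    rw [norm_sub_sq_real, real_inner_smul_right, norm_smul, hnorm_e, hcomm,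
      Real.norm_eq_abs, mul_one, sq_abs]
    ring
  clear_value t
  set A : ℝ := ‖x‖ ^ 2 + (c / s) ^ 2 * t ^ 2 with hAdef
  have hA : 0 ≤ A := by positivity
  have hF : Fdual n θ x = (1 / s) * (Real.sqrt A - (c / s) * t) := by
    rw [Fdual, ← htdef]
  clear_value A
  clear_value s c
  clear hcomm ht hxlast hx htdef hsdef hcdef
  constructor
  · intro h
    rw [hF] at h
    have hsq : Real.sqrt A = r * s + (c / s) * t := by
      field_simp at h ⊢
      linarith [h]
    have hA2 : A = (r * s + (c / s) * t) ^ 2 := by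
      rw [← hsq, Real.sq_sqrt hA]
    have hx2 : ‖x‖ ^ 2 = r ^ 2 * s ^ 2 + 2 * r * c * t := by
      have h3 : s ^ 2 * ‖x‖ ^ 2 = s ^ 2 * (r ^ 2 * s ^ 2 + 2 * r * c * t) := by
        have h4 : s ^ 2 * A = s ^ 2 * (r * s + (c / s) * t) ^ 2 := by rw [hA2]
        rw [hAdef] at h4
        field_simp at h4
        linarith [h4]
      exact mul_left_cancel₀ (by positivity) h3
    have hsq2 : ‖x - (r * c) • eVec n‖ ^ 2 = r ^ 2 := by
      rw [hexp, hx2]; linear_combination r ^ 2 * hpy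
    calc ‖x - (r * c) • eVec n‖ = Real.sqrt (‖x - (r * c) • eVec n‖ ^ 2) :=
          (Real.sqrt_sq (norm_nonneg _)).symm
      _ = Real.sqrt (r ^ 2) := by rw [hsq2]
      _ = r := Real.sqrt_sq hr.le
  · intro h
    have hsq2 : ‖x‖ ^ 2 - 2 * (r * c) * t + (r * c) ^ 2 = r ^ 2 := by
      rw [← hexp, h]
    have hx2 : ‖x‖ ^ 2 = r ^ 2 * s ^ 2 + 2 * r * c * t := by
      linear_combination hsq2 - r ^ 2 * hpy
    clear h hexp
    have hBnn : 0 ≤ r * s + (c / s) * t := by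
      rcases le_or_gt c 0 with hc | hc
      · have h5 : 0 ≤ (c / s) * t := by
          nlinarith [div_nonpos_of_nonpos_of_nonneg hc hs.le, htle]
        nlinarith [mul_pos hr hs]
      · have ht2 : t ^ 2 ≤ r ^ 2 * s ^ 2 + 2 * r * c * t := by rw [← hx2]; exact habs
        have key : 0 ≤ r * s ^ 2 + c * t := by
          nlinarith [ht2, sq_nonneg (t - r * c + r), mul_pos hr hc,
            mul_nonneg hr.le (sub_nonneg.2 hc1), hpy, hr, hc1]
        have heq : r * s + (c / s) * t = (r * s ^ 2 + c * t) / s := by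
          field_simp
        rw [heq]
        positivity
    have hA2 : A = (r * s + (c / s) * t) ^ 2 := by
      rw [hAdef, hx2]; field_simp; ring
    have hsq : Real.sqrt A = r * s + (c / s) * t := by
      rw [hA2, Real.sqrt_sq hBnn]
    rw [hF, hsq]
    field_simp
    ring

end
end

section
/- Let θ ∈ (0,π), F_θ(η) := |η| + cos θ·⟨e,η⟩, and define the capillary Cahn–Hoffman map Ψ(ξ) := (ξ − cos θ·e)/ℓ(ξ). Then Ψ is a bijection from the unit spherical cap C_θ onto the set D_θ := {η ∈ ℝ^{n+1} : F_θ(η) = 1 and ⟨η, E_{n+1}⟩ ≥ cos θ/sin²θ}. Moreover, for every ξ ∈ C_θ one has ℓ(ξ) = F_θ(ξ − cos θ·e). -/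
open MeasureTheory Real Set Filter
open scoped RealInnerProductSpace

noncomputable section

/-!
On `C_θ` the vector `ν := ξ - cos θ · e` is a unit vector and `ℓ(ξ) = F_θ(ν)`, so
`Ψ(ξ) = ν / F_θ(ν)` is the radial projection of the unit sphere onto the level set `{F_θ = 1}`,
which is well defined because `|cos θ| < 1` makes `F_θ` positive away from `0`. Its inverse is
`η ↦ cos θ · e + η / |η|`. Under this correspondence the half-space condition `cos θ ≤ ⟨ν, E_{n+1}⟩`
on `C_θ` becomes `cos θ · |η| ≤ ⟨η, E_{n+1}⟩`, which on `{F_θ = 1}`, where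
`|η| = 1 + cos θ · ⟨η, E_{n+1}⟩`, is the condition `cos θ / sin²θ ≤ ⟨η, E_{n+1}⟩` defining `D_θ`.
-/

open NormedSpace

section CahnHoffman

variable {n : ℕ} {θ : ℝ}

lemma inner_lastBasis (x : Amb n) : ⟪x, lastBasis n⟫ = x (Fin.last n) := by
  simp [lastBasis, EuclideanSpace.inner_single_right]

lemma inner_eVec_lastBasis : ⟪eVec n, lastBasis n⟫ = -1 := by
  simp [eVec, lastBasis]

lemma norm_eVec : ‖eVec n‖ = 1 := by
  simp [eVec, lastBasis]

lemma inner_eVec_self : ⟪eVec n, eVec n⟫ = 1 := by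
  rw [real_inner_self_eq_norm_sq, norm_eVec, one_pow]

lemma inner_eVec_eq_neg_inner_lastBasis (x : Amb n) : ⟪eVec n, x⟫ = -⟪x, lastBasis n⟫ := by
  rw [real_inner_comm, eVec, inner_neg_right]

lemma mem_upperHalf_iff (a : ℝ) (x : Amb n) :
    x ∈ upperHalf n ↔ a ≤ ⟪x - a • eVec n, lastBasis n⟫ := by
  rw [inner_sub_left, real_inner_smul_left, inner_eVec_lastBasis, inner_lastBasis, upperHalf,
    mem_ofPred_eq]
  constructor <;> intro h <;> linarith

lemma Fgauge_smul_of_nonneg {r : ℝ} (hr : 0 ≤ r) (η : Amb n) :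
    Fgauge n θ (r • η) = r * Fgauge n θ η := by
  rw [Fgauge, Fgauge, norm_smul, real_inner_smul_right, Real.norm_of_nonneg hr]
  ring

lemma Fgauge_pos (hθ : sin θ ≠ 0) {η : Amb n} (hη : η ≠ 0) : 0 < Fgauge n θ η := by
  have hcos : |cos θ| < 1 := by
    have : 0 < sin θ ^ 2 := by positivity
    rw [← sq_lt_one_iff_abs_lt_one]
    linarith [sin_sq_add_cos_sq θ]
  have hinner : |⟪eVec n, η⟫| ≤ ‖η‖ := by
    simpa [norm_eVec] using abs_real_inner_le_norm (eVec n) η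
  have hsmall : |cos θ * ⟪eVec n, η⟫| < ‖η‖ :=
    calc |cos θ * ⟪eVec n, η⟫| = |cos θ| * |⟪eVec n, η⟫| := abs_mul _ _
      _ ≤ |cos θ| * ‖η‖ := by gcongr
      _ < ‖η‖ := mul_lt_of_lt_one_left (norm_pos_iff.mpr hη) hcos
  rw [Fgauge]
  linarith [neg_abs_le (cos θ * ⟪eVec n, η⟫)]

lemma ne_zero_of_Fgauge_eq_one {η : Amb n} (hη : Fgauge n θ η = 1) : η ≠ 0 := by
  rintro rfl
  simp [Fgauge] at hη

lemma ell_eq_Fgauge {ξ : Amb n} (hξ : ‖ξ - cos θ • eVec n‖ = 1) :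
    ell n θ ξ = Fgauge n θ (ξ - cos θ • eVec n) := by
  rw [ell, Fgauge, hξ, inner_sub_right, real_inner_smul_right, inner_eVec_self,
    real_inner_comm]
  linear_combination sin_sq_add_cos_sq θ

lemma ell_pos (hθ : sin θ ≠ 0) {ξ : Amb n} (hξ : ‖ξ - cos θ • eVec n‖ = 1) :
    0 < ell n θ ξ :=
  ell_eq_Fgauge hξ ▸ Fgauge_pos hθ (norm_ne_zero_iff.mp (hξ ▸ one_ne_zero))

lemma div_sin_sq_le_inner_lastBasis_iff (hθ : sin θ ≠ 0) {η : Amb n} (hη : Fgauge n θ η = 1) :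
    cos θ / sin θ ^ 2 ≤ ⟪η, lastBasis n⟫ ↔ cos θ ≤ ⟪normalize η, lastBasis n⟫ := by
  have hnorm : ‖η‖ = 1 + cos θ * ⟪η, lastBasis n⟫ := by
    rw [Fgauge, inner_eVec_eq_neg_inner_lastBasis] at hη
    linarith
  have hscaled : ‖η‖ * cos θ = cos θ + ⟪η, lastBasis n⟫ - ⟪η, lastBasis n⟫ * sin θ ^ 2 := by
    rw [hnorm]
    linear_combination ⟪η, lastBasis n⟫ * sin_sq_add_cos_sq θ
  rw [NormedSpace.normalize, real_inner_smul_left,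
    le_inv_mul_iff₀ (norm_pos_iff.mpr (ne_zero_of_Fgauge_eq_one hη)), hscaled,
    div_le_iff₀ (by positivity)]
  constructor <;> intro h <;> linarith

def cahnHoffmanInv (n : ℕ) (θ : ℝ) (η : Amb n) : Amb n :=
  cos θ • eVec n + normalize η

lemma cahnHoffmanInv_sub_smul_eVec (η : Amb n) :
    cahnHoffmanInv n θ η - cos θ • eVec n = normalize η :=
  add_sub_cancel_left _ _

lemma Fgauge_cahnHoffman (hθ : sin θ ≠ 0) {ξ : Amb n} (hξ : ‖ξ - cos θ • eVec n‖ = 1) :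
    Fgauge n θ (cahnHoffman n θ ξ) = 1 := by
  have hℓ := ell_pos hθ hξ
  rw [cahnHoffman, Fgauge_smul_of_nonneg (inv_nonneg.mpr hℓ.le), ← ell_eq_Fgauge hξ,
    inv_mul_cancel₀ hℓ.ne']

lemma normalize_cahnHoffman (hθ : sin θ ≠ 0) {ξ : Amb n} (hξ : ‖ξ - cos θ • eVec n‖ = 1) :
    normalize (cahnHoffman n θ ξ) = ξ - cos θ • eVec n := by
  rw [cahnHoffman, normalize_smul_of_pos (inv_pos.mpr (ell_pos hθ hξ)),
    normalize_eq_self_of_norm_eq_one hξ]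

lemma mapsTo_cahnHoffman (hθ : sin θ ≠ 0) :
    MapsTo (cahnHoffman n θ) (capSphere n θ) (Dtheta n θ) := by
  rintro ξ ⟨hup, hξ⟩
  refine ⟨Fgauge_cahnHoffman hθ hξ, ?_⟩
  rw [div_sin_sq_le_inner_lastBasis_iff hθ (Fgauge_cahnHoffman hθ hξ),
    normalize_cahnHoffman hθ hξ]
  exact (mem_upperHalf_iff _ _).mp hup

lemma mapsTo_cahnHoffmanInv (hθ : sin θ ≠ 0) :
    MapsTo (cahnHoffmanInv n θ) (Dtheta n θ) (capSphere n θ) := by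
  rintro η ⟨hη, hlast⟩
  have hsub := cahnHoffmanInv_sub_smul_eVec (θ := θ) η
  refine ⟨(mem_upperHalf_iff (cos θ) _).mpr ?_, ?_⟩
  · rw [hsub]
    exact (div_sin_sq_le_inner_lastBasis_iff hθ hη).mp hlast
  · rw [hsub, norm_normalize_eq_one_iff]
    exact ne_zero_of_Fgauge_eq_one hη

lemma leftInvOn_cahnHoffmanInv (hθ : sin θ ≠ 0) :
    LeftInvOn (cahnHoffmanInv n θ) (cahnHoffman n θ) (capSphere n θ) := by
  rintro ξ ⟨-, hξ⟩
  rw [cahnHoffmanInv, normalize_cahnHoffman hθ hξ, add_sub_cancel]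

lemma rightInvOn_cahnHoffmanInv :
    RightInvOn (cahnHoffmanInv n θ) (cahnHoffman n θ) (Dtheta n θ) := by
  rintro η ⟨hη, -⟩
  have hη0 := ne_zero_of_Fgauge_eq_one hη
  have hsub := cahnHoffmanInv_sub_smul_eVec (θ := θ) η
  have hℓ : ell n θ (cahnHoffmanInv n θ η) = ‖η‖⁻¹ := by
    rw [ell_eq_Fgauge (hsub ▸ norm_normalize_eq_one_iff.mpr hη0), hsub,
      NormedSpace.normalize, Fgauge_smul_of_nonneg (inv_nonneg.mpr (norm_nonneg η)), hη, mul_one]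
  rw [cahnHoffman, hℓ, inv_inv, hsub, norm_smul_normalize]

end CahnHoffman

theorem stmt_2_general (n : ℕ) (θ : ℝ) (hθ : θ ∈ Set.Ioo 0 π) :
    Set.BijOn (cahnHoffman n θ) (capSphere n θ) (Dtheta n θ) ∧
    ∀ ξ ∈ capSphere n θ, ell n θ ξ = Fgauge n θ (ξ - cos θ • eVec n) := by
  have hsin : sin θ ≠ 0 := (sin_pos_of_pos_of_lt_pi hθ.1 hθ.2).ne'
  exact ⟨InvOn.bijOn ⟨leftInvOn_cahnHoffmanInv hsin, rightInvOn_cahnHoffmanInv⟩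
    (mapsTo_cahnHoffman hsin) (mapsTo_cahnHoffmanInv hsin), fun ξ hξ => ell_eq_Fgauge hξ.2⟩

/-- the capillary Cahn–Hoffman map `Ψ` is a bijection from `C_θ` onto `D_θ`,
and `ℓ(ξ) = F_θ(ξ - cos θ · e)` for every `ξ ∈ C_θ`. -/
theorem stmt_2 (n : ℕ) (hn : 1 ≤ n) (θ : ℝ) (hθ : θ ∈ Set.Ioo 0 π) :
    Set.BijOn (cahnHoffman n θ) (capSphere n θ) (Dtheta n θ) ∧
    ∀ ξ ∈ capSphere n θ, ell n θ ξ = Fgauge n θ (ξ - cos θ • eVec n) :=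
  stmt_2_general n θ hθ

end
end

section
/- Let θ ∈ (0,π/2) and let K be a capillary convex body. Then the capillary outer radius and the classical outer radius of K satisfy (1 − cos θ)·ρ_+(K,θ) ≤ ρ_+(K) ≤ sin θ·ρ_+(K,θ). -/
open MeasureTheory Real Set Filter
open scoped RealInnerProductSpace

noncomputable section

/-!
A ball of radius `ρ` centred on `∂ℝ^{n+1}_+` lies, inside the half-space, in the cap body of
radius `ρ / (1 - cos θ)` with the same base point: the cap's centre sits at depth `r cos θ`
below `x₀`. Conversely the cap body `Ĉ_{r,θ}(x₀)` is contained in the closed ball of radius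
`r sin θ` about `x₀`, the radius of its flat face. Passing to infima gives both inequalities.
-/

open Metric Bornology

namespace Capillary

variable {n : ℕ}

lemma norm_lastBasis : ‖lastBasis n‖ = 1 := by
  simp [lastBasis]

lemma inner_lastBasis (x : Amb n) : ⟪x, lastBasis n⟫ = x (Fin.last n) := by
  simp [lastBasis, EuclideanSpace.inner_single_right]

lemma sub_capCentre (θ r : ℝ) (x x₀ : Amb n) :
    x - (x₀ + (r * cos θ) • eVec n) = (x - x₀) + (r * cos θ) • lastBasis n := by
  rw [eVec, smul_neg]
  abel

theorem ball_inter_upperHalf_subset_capBodyAt {θ : ℝ} (hcos : 0 ≤ cos θ) (hcos1 : cos θ < 1)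
    (x₀ : Amb n) (ρ : ℝ) :
    ball x₀ ρ ∩ upperHalf n ⊆ capBodyAt n θ (ρ / (1 - cos θ)) x₀ := by
  rintro x ⟨hxρ, hx⟩
  set r := ρ / (1 - cos θ)
  have hdist : ‖x - x₀‖ < ρ := mem_ball_iff_norm.mp hxρ
  have hr : 0 ≤ r := div_nonneg ((norm_nonneg _).trans hdist.le) (by linarith)
  have hρ : r * (1 - cos θ) = ρ := div_mul_cancel₀ ρ (by linarith)
  refine ⟨hx, ?_⟩
  calc ‖x - (x₀ + (r * cos θ) • eVec n)‖
      = ‖(x - x₀) + (r * cos θ) • lastBasis n‖ := by rw [sub_capCentre]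
    _ ≤ ‖x - x₀‖ + r * cos θ := by
        refine (norm_add_le _ _).trans_eq ?_
        rw [norm_smul, norm_lastBasis, mul_one, norm_of_nonneg (mul_nonneg hr hcos)]
    _ ≤ r := by linarith

theorem capBodyAt_subset_closedBall {θ : ℝ} (hcos : 0 ≤ cos θ) (hsin : 0 ≤ sin θ) (r : ℝ)
    {x₀ : Amb n} (hx₀ : x₀ ∈ hyperplane n) :
    capBodyAt n θ r x₀ ⊆ closedBall x₀ (r * sin θ) := by
  rintro x ⟨hx, hxr⟩
  have hcentre := sub_capCentre θ r x x₀
  set v := x - (x₀ + (r * cos θ) • eVec n)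
  have hx₀' : x₀ (Fin.last n) = 0 := hx₀
  have hr : 0 ≤ r := (norm_nonneg v).trans hxr
  have hv : x - x₀ = v - (r * cos θ) • lastBasis n := by
    rw [hcentre]
    abel
  have hvE : ⟪v, lastBasis n⟫ = x (Fin.last n) + r * cos θ := by
    rw [hcentre, inner_add_left, real_inner_smul_left, inner_lastBasis, real_inner_self_eq_norm_sq,
      norm_lastBasis, PiLp.sub_apply, hx₀']
    ring
  have hsq : ‖x - x₀‖ ^ 2 ≤ (r * sin θ) ^ 2 := by
    have hlast : 0 ≤ r * cos θ * x (Fin.last n) := mul_nonneg (mul_nonneg hr hcos) hx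
    have hv2 : ‖v‖ ^ 2 ≤ r ^ 2 := pow_le_pow_left₀ (norm_nonneg v) hxr 2
    rw [hv, norm_sub_sq_real, real_inner_smul_right, hvE, norm_smul, norm_lastBasis, mul_one,
      Real.norm_eq_abs, sq_abs]
    nlinarith [sin_sq_add_cos_sq θ]
  rw [mem_closedBall, dist_eq_norm]
  exact (pow_le_pow_iff_left₀ (norm_nonneg _) (mul_nonneg hr hsin) two_ne_zero).mp hsq

lemma outRadius_le_of_subset_closedBall {K : Set (Amb n)} {x₀ : Amb n} (hx₀ : x₀ ∈ hyperplane n)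
    {ρ : ℝ} (hρ : 0 ≤ ρ) (hK : K ⊆ closedBall x₀ ρ) : outRadius n K ≤ ρ := by
  refine le_of_forall_pos_le_add fun ε hε ↦ csInf_le ⟨0, fun _ h ↦ h.1.le⟩ ?_
  exact ⟨by positivity, x₀, hx₀, hK.trans (closedBall_subset_ball (by linarith))⟩

lemma exists_subset_ball_of_isBounded {K : Set (Amb n)} (hK : IsBounded K) :
    ∃ ρ, 0 < ρ ∧ ∃ x₀ ∈ hyperplane n, K ⊆ ball x₀ ρ := by
  obtain ⟨ρ, hρ, hKρ⟩ := hK.subset_ball_lt 0 0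
  exact ⟨ρ, hρ, 0, by simp [hyperplane], hKρ⟩

lemma subset_capBodyAt_of_subset_ball {θ : ℝ} (hcos : 0 ≤ cos θ) (hcos1 : cos θ < 1)
    {K : Set (Amb n)} (hKu : K ⊆ upperHalf n) {x₀ : Amb n} {ρ : ℝ} (hKρ : K ⊆ ball x₀ ρ) :
    K ⊆ capBodyAt n θ (ρ / (1 - cos θ)) x₀ :=
  fun _ hx ↦ ball_inter_upperHalf_subset_capBodyAt hcos hcos1 x₀ ρ ⟨hKρ hx, hKu hx⟩

theorem one_sub_cos_mul_capOutRadius_le_outRadius {θ : ℝ} (hcos : 0 ≤ cos θ) (hcos1 : cos θ < 1)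
    {K : Set (Amb n)} (hK : IsBounded K) (hKu : K ⊆ upperHalf n) :
    (1 - cos θ) * capOutRadius n θ K ≤ outRadius n K := by
  have h1c : 0 < 1 - cos θ := by linarith
  refine le_csInf (exists_subset_ball_of_isBounded hK) ?_
  rintro ρ ⟨hρ, x₀, hx₀, hKρ⟩
  have hcap : capOutRadius n θ K ≤ ρ / (1 - cos θ) :=
    csInf_le ⟨0, fun _ h ↦ h.1.le⟩
      ⟨div_pos hρ h1c, x₀, hx₀, subset_capBodyAt_of_subset_ball hcos hcos1 hKu hKρ⟩
  rwa [le_div_iff₀ h1c, mul_comm] at hcap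

theorem outRadius_le_sin_mul_capOutRadius {θ : ℝ} (hcos : 0 ≤ cos θ) (hsin : 0 ≤ sin θ)
    {K : Set (Amb n)} (hK : ∃ r, 0 < r ∧ ∃ x₀ ∈ hyperplane n, K ⊆ capBodyAt n θ r x₀) :
    outRadius n K ≤ sin θ * capOutRadius n θ K := by
  rw [capOutRadius, ← smul_eq_mul, ← Real.sInf_smul_of_nonneg hsin]
  refine le_csInf (Set.Nonempty.smul_set hK) ?_
  rintro _ ⟨r, ⟨hr, x₀, hx₀, hKr⟩, rfl⟩
  change outRadius n K ≤ sin θ * r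
  rw [mul_comm]
  exact outRadius_le_of_subset_closedBall hx₀ (mul_nonneg hr.le hsin)
    (hKr.trans (capBodyAt_subset_closedBall hcos hsin r hx₀))

end Capillary

open Capillary in
theorem stmt_6_general (n : ℕ) (θ : ℝ) (hθ : θ ∈ Set.Ioo 0 (π / 2))
    (K : Set (Amb n)) (hK : IsCapillaryBody n K) :
    (1 - cos θ) * capOutRadius n θ K ≤ outRadius n K ∧
    outRadius n K ≤ sin θ * capOutRadius n θ K := by
  obtain ⟨hθ0, hθπ⟩ := hθ
  have hcos : 0 ≤ cos θ := (cos_pos_of_mem_Ioo ⟨by linarith [pi_pos], hθπ⟩).le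
  have hcos1 : cos θ < 1 := cos_zero ▸ cos_lt_cos_of_nonneg_of_le_pi_div_two le_rfl hθπ.le hθ0
  have hsin : 0 ≤ sin θ := (sin_pos_of_mem_Ioo ⟨hθ0, by linarith [pi_pos]⟩).le
  have hbdd : IsBounded K := hK.compact.isBounded
  obtain ⟨ρ, hρ, x₀, hx₀, hKρ⟩ := exists_subset_ball_of_isBounded hbdd
  have hcapNonempty : ∃ r, 0 < r ∧ ∃ x₀ ∈ hyperplane n, K ⊆ capBodyAt n θ r x₀ :=
    ⟨ρ / (1 - cos θ), div_pos hρ (by linarith), x₀, hx₀,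
      subset_capBodyAt_of_subset_ball hcos hcos1 hK.subset_upper hKρ⟩
  exact ⟨one_sub_cos_mul_capOutRadius_le_outRadius hcos hcos1 hbdd hK.subset_upper,
    outRadius_le_sin_mul_capOutRadius hcos hsin hcapNonempty⟩

/-- `(1 - cos θ) ρ₊(K, θ) ≤ ρ₊(K) ≤ sin θ · ρ₊(K, θ)` for `θ ∈ (0, π/2)`. -/
theorem stmt_6 (n : ℕ) (hn : 1 ≤ n) (θ : ℝ) (hθ : θ ∈ Set.Ioo 0 (π / 2))
    (K : Set (Amb n)) (hK : IsCapillaryBody n K) :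
    (1 - cos θ) * capOutRadius n θ K ≤ outRadius n K ∧
    outRadius n K ≤ sin θ * capOutRadius n θ K :=
  stmt_6_general n θ hθ K hK

end
end
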